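/- Let φ be a proper (2m−1)-edge-coloring of the complete graph K_{2m} with m ≥ 2, and suppose a and b are two distinct colors that do NOT induce a C4-factor. Then there exist four distinct vertices x_1, x_2, x_3, x_4 such that φ(x_1 x_4) = φ(x_2 x_3) = a, φ(x_1 x_2) = b, and φ(x_3 x_4) ∉ {a, b}. -/

import Mathlib

/-- `φ` is a proper edge-coloring of the complete graph on `V` (given as a function on
unordered pairs of vertices): two edges sharing a vertex receive distinct colors. -/
def IsProperEdgeColoring {V C : Type*} (φ : Sym2 V → C) : Prop :=
  ∀ u v w : V, u ≠ v → u ≠ w → v ≠ w → φ s(u, v) ≠ φ s(u, w)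

/-- The spanning subgraph of the complete graph on `V` consisting of the edges
colored `a` or `b`. -/
def colorPairGraph {V C : Type*} (φ : Sym2 V → C) (a b : C) : SimpleGraph V where
  Adj u v := u ≠ v ∧ (φ s(u, v) = a ∨ φ s(u, v) = b)
  symm := ⟨by
    intro u v h
    exact ⟨h.1.symm, by rw [Sym2.eq_swap]; exact h.2⟩⟩
  loopless := ⟨fun v h => h.1 rfl⟩

/-- A graph is a `C4`-factor (of the complete graph on its vertex type) if it is
2-regular and every connected component is a 4-cycle (equivalently, for a 2-regular
graph, every connected component has exactly 4 vertices). -/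
def IsC4Factor {V : Type*} (G : SimpleGraph V) : Prop :=
  (∀ v : V, (G.neighborSet v).ncard = 2) ∧
  ∀ c : G.ConnectedComponent, c.supp.ncard = 4

/-- The set of colors appearing on edges of the clique induced by the vertex set `S`. -/
def cliqueColors {V C : Type*} (φ : Sym2 V → C) (S : Set V) : Set C :=
  {c | ∃ u ∈ S, ∃ v ∈ S, u ≠ v ∧ φ s(u, v) = c}

/-!
Since `K_{2m}` has `2m - 1` colors and every vertex has `2m - 1` incident edges of distinct
colors, each color class is a perfect matching, so the colors `a, b` induce a 2-regular graph
whose components are alternating `a`/`b` cycles. Start at a vertex `x₁` of a component that is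
not a 4-cycle and walk `x₄ -a- x₁ -b- x₂ -a- x₃`. Properness makes these four vertices distinct
and rules out `φ(x₃x₄) = a`; if `φ(x₃x₄) = b` the walk would close up into a 4-cycle, which is
then the whole component.
-/

namespace SimpleGraph.ConnectedComponent

variable {V : Type*} {G : SimpleGraph V}

theorem supp_eq_of_forall_adj_mem {v : V} {S : Set V}
    (hclosed : ∀ u ∈ S, ∀ w, G.Adj u w → w ∈ S) (hv : v ∈ S)
    (hreach : ∀ w ∈ S, G.Reachable v w) : (G.connectedComponentMk v).supp = S := by
  have hwalk : ∀ {u w : V}, G.Walk u w → u ∈ S → w ∈ S := by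
    intro u w p
    induction p with
    | nil => exact id
    | cons h _ ih => exact fun hu => ih (hclosed _ hu _ h)
  ext w
  rw [mem_supp_iff, ConnectedComponent.eq]
  exact ⟨fun ⟨p⟩ => hwalk p.reverse hv, fun hw => (hreach w hw).symm⟩

end SimpleGraph.ConnectedComponent

namespace IsProperEdgeColoring

variable {V C : Type*} {φ : Sym2 V → C}

theorem eq_of_color_eq (hφ : IsProperEdgeColoring φ) {v w w' : V} (hw : v ≠ w) (hw' : v ≠ w')
    (h : φ s(v, w) = φ s(v, w')) : w = w' := by
  by_contra hne
  exact hφ v w w' hw hw' hne h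

theorem exists_color_eq [Fintype V] [Fintype C] (hφ : IsProperEdgeColoring φ)
    (hcard : Fintype.card C ≤ Fintype.card V - 1) (c : C) (v : V) :
    ∃ w, v ≠ w ∧ φ s(v, w) = c := by
  classical
  let g : {w // v ≠ w} → C := fun w => φ s(v, w.1)
  have hinj : Function.Injective g := fun w w' h => Subtype.ext (hφ.eq_of_color_eq w.2 w'.2 h)
  have hcard' : Fintype.card {w // v ≠ w} = Fintype.card V - 1 := by
    simp [Fintype.card_subtype_compl]
  obtain ⟨w, hw⟩ := ((Fintype.bijective_iff_injective_and_card g).mpr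
    ⟨hinj, le_antisymm (Fintype.card_le_of_injective g hinj) (hcard'.symm ▸ hcard)⟩).2 c
  exact ⟨w.1, w.2, hw⟩

variable {a b : C}

theorem neighborSet_colorPairGraph (hφ : IsProperEdgeColoring φ) {v wa wb : V}
    (hwa : v ≠ wa) (ha : φ s(v, wa) = a) (hwb : v ≠ wb) (hb : φ s(v, wb) = b) :
    (colorPairGraph φ a b).neighborSet v = {wa, wb} := by
  ext w
  refine ⟨fun ⟨hw, hc⟩ => ?_, ?_⟩
  · rcases hc with hc | hc
    · exact .inl (hφ.eq_of_color_eq hw hwa (hc.trans ha.symm))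
    · exact .inr (hφ.eq_of_color_eq hw hwb (hc.trans hb.symm))
  · rintro (rfl | rfl)
    exacts [⟨hwa, .inl ha⟩, ⟨hwb, .inr hb⟩]

theorem supp_colorPairGraph_of_cycle (hφ : IsProperEdgeColoring φ) {x₁ x₂ x₃ x₄ : V}
    (h12 : x₁ ≠ x₂) (h23 : x₂ ≠ x₃) (h34 : x₃ ≠ x₄) (h14 : x₁ ≠ x₄)
    (c12 : φ s(x₁, x₂) = b) (c23 : φ s(x₂, x₃) = a) (c34 : φ s(x₃, x₄) = b)
    (c14 : φ s(x₁, x₄) = a) :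
    ((colorPairGraph φ a b).connectedComponentMk x₁).supp = {x₁, x₂, x₃, x₄} := by
  have hadj12 : (colorPairGraph φ a b).Adj x₁ x₂ := ⟨h12, .inr c12⟩
  have hadj23 : (colorPairGraph φ a b).Adj x₂ x₃ := ⟨h23, .inl c23⟩
  have hadj14 : (colorPairGraph φ a b).Adj x₁ x₄ := ⟨h14, .inl c14⟩
  refine SimpleGraph.ConnectedComponent.supp_eq_of_forall_adj_mem ?_ (by simp) ?_
  · intro u hu w hw
    change w ∈ (colorPairGraph φ a b).neighborSet u at hw
    rcases hu with rfl | rfl | rfl | rfl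
    · rw [hφ.neighborSet_colorPairGraph h14 c14 h12 c12] at hw
      rcases hw with rfl | rfl <;> simp
    · rw [hφ.neighborSet_colorPairGraph h23 c23 h12.symm (Sym2.eq_swap ▸ c12)] at hw
      rcases hw with rfl | rfl <;> simp
    · rw [hφ.neighborSet_colorPairGraph h23.symm (Sym2.eq_swap ▸ c23) h34 c34] at hw
      rcases hw with rfl | rfl <;> simp
    · rw [hφ.neighborSet_colorPairGraph h14.symm (Sym2.eq_swap ▸ c14) h34.symm
        (Sym2.eq_swap ▸ c34)] at hw
      rcases hw with rfl | rfl <;> simp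
  · rintro w (rfl | rfl | rfl | rfl)
    exacts [.rfl, hadj12.reachable, hadj12.reachable.trans hadj23.reachable, hadj14.reachable]

theorem ncard_neighborSet_colorPairGraph (hφ : IsProperEdgeColoring φ)
    (hsurj : ∀ c v, ∃ w, v ≠ w ∧ φ s(v, w) = c) (hab : a ≠ b) (v : V) :
    ((colorPairGraph φ a b).neighborSet v).ncard = 2 := by
  obtain ⟨wa, hwa, ha⟩ := hsurj a v
  obtain ⟨wb, hwb, hb⟩ := hsurj b v
  rw [hφ.neighborSet_colorPairGraph hwa ha hwb hb, Set.ncard_pair]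
  rintro rfl
  exact hab (ha.symm.trans hb)

theorem exists_path_of_ncard_supp_ne_four (hφ : IsProperEdgeColoring φ)
    (hsurj : ∀ c v, ∃ w, v ≠ w ∧ φ s(v, w) = c) (hab : a ≠ b) {x₁ : V}
    (hx₁ : ((colorPairGraph φ a b).connectedComponentMk x₁).supp.ncard ≠ 4) :
    ∃ x₁ x₂ x₃ x₄ : V,
      (x₁ ≠ x₂ ∧ x₁ ≠ x₃ ∧ x₁ ≠ x₄ ∧ x₂ ≠ x₃ ∧ x₂ ≠ x₄ ∧ x₃ ≠ x₄) ∧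
      φ s(x₁, x₄) = a ∧ φ s(x₂, x₃) = a ∧ φ s(x₁, x₂) = b ∧
      φ s(x₃, x₄) ≠ a ∧ φ s(x₃, x₄) ≠ b := by
  obtain ⟨x₂, h12, c12⟩ := hsurj b x₁
  obtain ⟨x₃, h23, c23⟩ := hsurj a x₂
  obtain ⟨x₄, h14, c14⟩ := hsurj a x₁
  have c32 : φ s(x₃, x₂) = a := Sym2.eq_swap ▸ c23
  have c41 : φ s(x₄, x₁) = a := Sym2.eq_swap ▸ c14
  have h24 : x₂ ≠ x₄ := by
    rintro rfl
    exact hab (c14.symm.trans c12)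
  have h13 : x₁ ≠ x₃ := by
    rintro rfl
    exact hab (c32.symm.trans c12)
  have h34 : x₃ ≠ x₄ := by
    rintro rfl
    exact h12 (hφ.eq_of_color_eq h14.symm h23.symm (c41.trans c32.symm))
  have c34a : φ s(x₃, x₄) ≠ a := fun h =>
    h24 (hφ.eq_of_color_eq h23.symm h34 (c32.trans h.symm))
  have c34b : φ s(x₃, x₄) ≠ b := by
    intro h
    apply hx₁
    rw [hφ.supp_colorPairGraph_of_cycle h12 h23 h34 h14 c12 c23 h c14,
      Set.ncard_insert_of_notMem (by simp [h12, h13, h14]),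
      Set.ncard_insert_of_notMem (by simp [h23, h24]), Set.ncard_pair h34]
  exact ⟨x₁, x₂, x₃, x₄, ⟨h12, h13, h14, h23, h24, h34⟩, c14, c23, c12, c34a, c34b⟩

end IsProperEdgeColoring

theorem exists_path_of_not_C4Factor_general (m : ℕ)
    (φ : Sym2 (Fin (2 * m)) → Fin (2 * m - 1))
    (hproper : IsProperEdgeColoring φ)
    (a b : Fin (2 * m - 1)) (hab : a ≠ b)
    (hnot : ¬ IsC4Factor (colorPairGraph φ a b)) :
    ∃ x₁ x₂ x₃ x₄ : Fin (2 * m),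
      (x₁ ≠ x₂ ∧ x₁ ≠ x₃ ∧ x₁ ≠ x₄ ∧ x₂ ≠ x₃ ∧ x₂ ≠ x₄ ∧ x₃ ≠ x₄) ∧
      φ s(x₁, x₄) = a ∧ φ s(x₂, x₃) = a ∧ φ s(x₁, x₂) = b ∧
      φ s(x₃, x₄) ≠ a ∧ φ s(x₃, x₄) ≠ b := by
  have hsurj : ∀ c v, ∃ w, v ≠ w ∧ φ s(v, w) = c := hproper.exists_color_eq (by simp)
  obtain ⟨c, hc⟩ : ∃ c : (colorPairGraph φ a b).ConnectedComponent, c.supp.ncard ≠ 4 := by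
    by_contra! h
    exact hnot ⟨hproper.ncard_neighborSet_colorPairGraph hsurj hab, h⟩
  obtain ⟨v, rfl⟩ := c.exists_rep
  exact hproper.exists_path_of_ncard_supp_ne_four hsurj hab hc

/-- If `φ` is a proper `(2m-1)`-edge-coloring of `K_{2m}` (`m ≥ 2`) and `a ≠ b` are two
colors which do *not* induce a `C4`-factor, then there are four distinct vertices
`x₁, x₂, x₃, x₄` with `φ(x₁x₄) = φ(x₂x₃) = a`, `φ(x₁x₂) = b` and `φ(x₃x₄) ∉ {a, b}`. -/
theorem exists_path_of_not_C4Factor (m : ℕ) (hm : 2 ≤ m)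
    (φ : Sym2 (Fin (2 * m)) → Fin (2 * m - 1))
    (hproper : IsProperEdgeColoring φ)
    (a b : Fin (2 * m - 1)) (hab : a ≠ b)
    (hnot : ¬ IsC4Factor (colorPairGraph φ a b)) :
    ∃ x₁ x₂ x₃ x₄ : Fin (2 * m),
      (x₁ ≠ x₂ ∧ x₁ ≠ x₃ ∧ x₁ ≠ x₄ ∧ x₂ ≠ x₃ ∧ x₂ ≠ x₄ ∧ x₃ ≠ x₄) ∧
      φ s(x₁, x₄) = a ∧ φ s(x₂, x₃) = a ∧ φ s(x₁, x₂) = b ∧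
      φ s(x₃, x₄) ≠ a ∧ φ s(x₃, x₄) ≠ b :=
  exists_path_of_not_C4Factor_general m φ hproper a b hab hnot
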